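/- arXiv:2108.11852 — 2 statements merged into one kernel-verified Lean document; each statement's English description precedes it below -/
import Mathlib

section
/- Let p, y, z ∈ ℝ^{n+1}, α > 0 with L := |y - p| ≥ α and |z - y| ≤ α/6, and let ν be a unit vector with ⟨(z-p)/|z-p|, ν⟩ ≥ α/|z-p|. Then, setting ω = (y-p)/|y-p|, we have ⟨ω, ν⟩ ≥ α/(2L). -/
/-! Moving the base point of the chord from `z` to `y` changes `⟨· - p, ν⟩` by at most
`|z - y| ≤ α/6`, so `⟨y - p, ν⟩ ≥ α - α/6 ≥ α/2`; dividing by `L = |y - p|` gives the claim.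
The only care needed is that `|z - p| ≥ L - α/6 > 0`, so that the normalisation of `z - p`
is not the junk value `0⁻¹ • 0`. -/

open RealInnerProductSpace

section

variable {E : Type*} [NormedAddCommGroup E] [InnerProductSpace ℝ E]

theorem div_norm_le_inner_inv_norm_smul_iff {x : E} (hx : x ≠ 0) (a : ℝ) (v : E) :
    a / ‖x‖ ≤ ⟪‖x‖⁻¹ • x, v⟫ ↔ a ≤ ⟪x, v⟫ := by
  rw [real_inner_smul_left, inv_mul_eq_div, div_le_div_iff_of_pos_right (norm_pos_iff.2 hx)]

theorem inner_sub_norm_sub_mul_norm_le_inner (x w v : E) :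
    ⟪x, v⟫ - ‖x - w‖ * ‖v‖ ≤ ⟪w, v⟫ := by
  have h : ⟪x - w, v⟫ ≤ ‖x - w‖ * ‖v‖ := real_inner_le_norm _ _
  rw [inner_sub_left] at h
  linarith

end

theorem inner_omega_nu_bound (n : ℕ) (p y z : EuclideanSpace ℝ (Fin (n+1)))
    (α L : ℝ) (hα : 0 < α) (hL : L = ‖y - p‖) (hLα : α ≤ L) (hzy : ‖z - y‖ ≤ α / 6)
    (ν : EuclideanSpace ℝ (Fin (n+1))) (hν : ‖ν‖ = 1)
    (hinner : α / ‖z - p‖ ≤ (inner ℝ ((‖z - p‖)⁻¹ • (z - p)) ν : ℝ)) :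
    α / (2 * L) ≤ (inner ℝ ((‖y - p‖)⁻¹ • (y - p)) ν : ℝ) := by
  have hzp : 0 < ‖z - p‖ := by
    have := norm_sub_le_norm_sub_add_norm_sub y z p
    rw [norm_sub_rev y z] at this
    linarith
  have hzν : α ≤ ⟪z - p, ν⟫ :=
    (div_norm_le_inner_inv_norm_smul_iff (norm_pos_iff.1 hzp) α ν).1 hinner
  have hyν : α / 2 ≤ ⟪y - p, ν⟫ := by
    have := inner_sub_norm_sub_mul_norm_le_inner (z - p) (y - p) ν
    rw [sub_sub_sub_cancel_right, hν, mul_one] at this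
    linarith
  have hyp : y - p ≠ 0 := norm_pos_iff.1 (hL ▸ hα.trans_le hLα)
  rw [hL, ← div_div, div_norm_le_inner_inv_norm_smul_iff hyp]
  exact hyν
end

section
/- Let a, b, d > 0 and C ≥ 1. Suppose that b ≤ C·a·(1 + a·d)² and a ≤ C·b·(1 + b·d)². Then there exists a constant c > 0 depending only on C such that b ≥ c·a·(1 + a·d)^{-2/3}. -/
theorem curvature_lower_bound (C : ℝ) (hC : 1 ≤ C) :
    ∃ c : ℝ, 0 < c ∧ ∀ a b d : ℝ, 0 < a → 0 < b → 0 < d →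
      b ≤ C * a * (1 + a * d) ^ 2 → a ≤ C * b * (1 + b * d) ^ 2 →
      c * a * (1 + a * d) ^ (-(2 : ℝ) / 3 : ℝ) ≤ b := by
  have hC0 : (0:ℝ) < C := lt_of_lt_of_le one_pos hC
  refine ⟨1 / (4 * C), by positivity, fun a b d ha hb hd h1 h2 => ?_⟩
  set P := 1 + a * d with hPdef
  have hP1 : (1:ℝ) ≤ P := by nlinarith
  have hP0 : (0:ℝ) < P := lt_of_lt_of_le one_pos hP1
  have hr0 : 0 < P ^ (-(2:ℝ)/3 : ℝ) := Real.rpow_pos_of_pos hP0 _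
  have hr1 : P ^ (-(2:ℝ)/3 : ℝ) ≤ 1 :=
    Real.rpow_le_one_of_one_le_of_nonpos hP1 (by norm_num)
  rcases le_or_gt (b * d) 1 with hbd | hbd
  · have hsq : (1 + b * d) ^ 2 ≤ 4 := by nlinarith [mul_pos hb hd]
    have h4 : a ≤ 4 * C * b := by
      calc a ≤ C * b * (1 + b * d) ^ 2 := h2
        _ ≤ C * b * 4 := mul_le_mul_of_nonneg_left hsq (by positivity)
        _ = 4 * C * b := by ring
    calc 1 / (4 * C) * a * P ^ (-(2:ℝ)/3:ℝ)
        ≤ 1 / (4 * C) * a * 1 :=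
          mul_le_mul_of_nonneg_left hr1 (by positivity)
      _ ≤ b := by
          rw [mul_one, div_mul_eq_mul_div, one_mul, div_le_iff₀ (by positivity)]
          linarith
  · have hda : d * a ≤ P := by nlinarith
    have h3 : a ≤ 4 * C * b ^ 3 * d ^ 2 := by nlinarith [sq_nonneg (b*d - 1), mul_pos hb hd]
    have hcube : a ^ 3 ≤ 4 * C * b ^ 3 * P ^ 2 := by
      have step1 : a ^ 3 ≤ 4 * C * b ^ 3 * (d * a) ^ 2 := by nlinarith [sq_nonneg a]
      have step2 : (d * a) ^ 2 ≤ P ^ 2 := by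
        apply pow_le_pow_left₀ (by positivity) hda
      have step3 : 4 * C * b ^ 3 * (d * a) ^ 2 ≤ 4 * C * b ^ 3 * P ^ 2 :=
        mul_le_mul_of_nonneg_left step2 (by positivity)
      linarith
    set x := 1 / (4 * C) * a * P ^ (-(2:ℝ)/3:ℝ) with hx
    have hx0 : 0 < x := by positivity
    have hrp : (P ^ (-(2:ℝ)/3:ℝ)) ^ (3:ℕ) = (P ^ 2)⁻¹ := by
      rw [← Real.rpow_natCast (P ^ (-(2:ℝ)/3:ℝ)) 3, ← Real.rpow_mul hP0.le]
      norm_num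
    have hC2 : (1:ℝ) ≤ C ^ 2 := by nlinarith
    have hC3 : C ≤ C ^ 3 := by nlinarith [mul_nonneg hC0.le (sub_nonneg.2 hC2)]
    have h64 : 4 * C ≤ (4 * C) ^ 3 := by nlinarith
    have hx3 : x ^ 3 ≤ b ^ 3 := by
      have hxe : x ^ 3 = (1 / (4 * C)) ^ 3 * a ^ 3 * (P ^ 2)⁻¹ := by
        rw [hx, mul_pow, mul_pow, hrp]
      rw [hxe, mul_inv_le_iff₀ (by positivity)]
      have heq : (1 / (4 * C)) ^ 3 * a ^ 3 = a ^ 3 / (4 * C) ^ 3 := by field_simp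
      rw [heq, div_le_iff₀ (by positivity)]
      have hmono : 4 * C * b ^ 3 * P ^ 2 ≤ (4 * C) ^ 3 * b ^ 3 * P ^ 2 := by
        calc 4 * C * b ^ 3 * P ^ 2 = 4 * C * (b ^ 3 * P ^ 2) := by ring
          _ ≤ (4 * C) ^ 3 * (b ^ 3 * P ^ 2) :=
              mul_le_mul_of_nonneg_right h64
                (mul_pos (pow_pos hb 3) (pow_pos hP0 2)).le
          _ = (4 * C) ^ 3 * b ^ 3 * P ^ 2 := by ring
      calc a ^ 3 ≤ 4 * C * b ^ 3 * P ^ 2 := hcube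
        _ ≤ (4 * C) ^ 3 * b ^ 3 * P ^ 2 := hmono
        _ = b ^ 3 * P ^ 2 * (4 * C) ^ 3 := by ring
    by_contra hcon
    push_neg at hcon
    have : b ^ 3 < x ^ 3 := pow_lt_pow_left₀ hcon hb.le (by norm_num)
    linarith
end
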